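/- arXiv:1001.1624 — 6 statements merged into one kernel-verified Lean document; each statement's English description precedes it below -/
import Mathlib

section
/- Let d ≥ 2, 1 ≤ m ≤ d, and let A_{d,m} = {e_1, ..., e_d, -e_1, ..., -e_m} ⊆ S^{d-1} ⊆ R^d, where e_i are the standard basis vectors. Then the greatest length u*(A_{d,m}) attained in any valid farthest-point iteration on A_{d,m} is at least √(d - m + 1). -/
open scoped RealInnerProductSpace
open Finset

/-!
Walk up the coordinates `e_{m+1}, …, e_d` one at a time. While the current vector is the
0/1-indicator of a set of coordinates beyond `m`, its inner products with `A_{d,m}` are all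
nonnegative, and `0` is attained by the next unused `e_j`; so after `d - m` steps the vector has
length `√(d - m)`. One more step by `-e_1`, again of inner product `0`, is orthogonal to it and
reaches length `√(d - m + 1)`. There all coordinates lie in `{-1, 0, 1}` and the first is `-1`,
so `+e_1` is a valid step back, and the iteration continues forever alternating `-e_1`, `+e_1`.
-/

section FarthestPointStep

variable {E : Type*} [NormedAddCommGroup E] [InnerProductSpace ℝ E]

def IsFarthestPointStep (X : Finset E) (v w : E) : Prop :=
  ∃ χ ∈ X, (∀ x ∈ X, ⟪χ, v⟫ ≤ ⟪x, v⟫) ∧ w = v + χ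

end FarthestPointStep

theorem exists_seq_of_path_of_cycle {α : Type*} {R : α → α → Prop} (u : ℕ → α) (n : ℕ)
    (hu : ∀ i < n, R (u i) (u (i + 1))) {q : α} (hpq : R (u n) q) (hqp : R q (u n)) :
    ∃ w : ℕ → α, w 0 = u 0 ∧ (∀ i, R (w i) (w (i + 1))) ∧ w (n + 1) = q := by
  refine ⟨fun i => if i ≤ n then u i else if Even (i - n) then u n else q, by simp,
    fun i => ?_, by simp⟩
  rcases lt_trichotomy i n with hi | rfl | hi
  · simpa [hi.le, Nat.succ_le_of_lt hi] using hu i hi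
  · simpa using hpq
  · have hparity : Even (i + 1 - n) ↔ ¬Even (i - n) := by
      rw [Nat.sub_add_comm hi.le, Nat.even_add_one]
    by_cases he : Even (i - n) <;>
      simp [hi.not_ge, (Nat.lt_succ_of_lt hi).not_ge, hparity, he, hpq, hqp]

section SignedBasis

variable {d m : ℕ}

def signedBasis (d m : ℕ) : Set (EuclideanSpace ℝ (Fin d)) :=
  (Set.range fun i : Fin d => EuclideanSpace.single i (1 : ℝ)) ∪
    ((fun i : Fin d => -EuclideanSpace.single i (1 : ℝ)) '' {i : Fin d | (i : ℕ) < m})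

variable {X : Finset (EuclideanSpace ℝ (Fin d))}

theorem single_mem_of_coe_eq_signedBasis (hX : (X : Set _) = signedBasis d m) (j : Fin d) :
    EuclideanSpace.single j (1 : ℝ) ∈ X := by
  rw [← Finset.mem_coe, hX]
  exact Or.inl ⟨j, rfl⟩

theorem neg_single_mem_of_coe_eq_signedBasis (hX : (X : Set _) = signedBasis d m) {j : Fin d}
    (hj : (j : ℕ) < m) :
    -EuclideanSpace.single j (1 : ℝ) ∈ X := by
  rw [← Finset.mem_coe, hX]
  exact Or.inr ⟨j, hj, rfl⟩

theorem isFarthestPointStep_of_forall_le (hX : (X : Set _) = signedBasis d m)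
    {v χ : EuclideanSpace ℝ (Fin d)} (hχ : χ ∈ X)
    (hle : ∀ j, ⟪χ, v⟫ ≤ v j) (hle_neg : ∀ j : Fin d, (j : ℕ) < m → ⟪χ, v⟫ ≤ -v j) :
    IsFarthestPointStep X v (v + χ) := by
  refine ⟨χ, hχ, fun x hx => ?_, rfl⟩
  rw [← Finset.mem_coe, hX] at hx
  rcases hx with ⟨j, rfl⟩ | ⟨j, hj, rfl⟩
  · simpa [EuclideanSpace.inner_single_left] using hle j
  · simpa [EuclideanSpace.inner_single_left] using hle_neg j hj

def indicatorVec (s : Finset (Fin d)) : EuclideanSpace ℝ (Fin d) :=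
  WithLp.toLp 2 fun k => if k ∈ s then 1 else 0

theorem indicatorVec_apply (s : Finset (Fin d)) (k : Fin d) :
    indicatorVec s k = if k ∈ s then 1 else 0 :=
  rfl

theorem indicatorVec_empty : indicatorVec (∅ : Finset (Fin d)) = 0 := by
  ext k
  simp [indicatorVec_apply]

theorem indicatorVec_insert {s : Finset (Fin d)} {j : Fin d} (hj : j ∉ s) :
    indicatorVec (insert j s) = indicatorVec s + EuclideanSpace.single j 1 := by
  ext k
  by_cases hk : k = j
  · subst hk
    simp [indicatorVec_apply, hj]
  · simp [indicatorVec_apply, hk]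

theorem norm_sq_indicatorVec (s : Finset (Fin d)) : ‖indicatorVec s‖ ^ 2 = #s := by
  simp [EuclideanSpace.real_norm_sq_eq, indicatorVec_apply]

theorem norm_sq_indicatorVec_sub_single {s : Finset (Fin d)} {j : Fin d} (hj : j ∉ s) :
    ‖indicatorVec s - EuclideanSpace.single j 1‖ ^ 2 = #s + 1 := by
  rw [norm_sub_sq_real, norm_sq_indicatorVec, EuclideanSpace.inner_single_right,
    indicatorVec_apply, if_neg hj]
  simp

theorem isFarthestPointStep_indicatorVec (hX : (X : Set _) = signedBasis d m) {s : Finset (Fin d)}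
    (hs : ∀ k : Fin d, (k : ℕ) < m → k ∉ s) {χ : EuclideanSpace ℝ (Fin d)} (hχ : χ ∈ X)
    (h0 : ⟪χ, indicatorVec s⟫ = 0) :
    IsFarthestPointStep X (indicatorVec s) (indicatorVec s + χ) := by
  refine isFarthestPointStep_of_forall_le hX hχ (fun j => ?_) (fun j hj => ?_) <;>
    rw [h0, indicatorVec_apply]
  · split_ifs <;> norm_num
  · rw [if_neg (hs j hj), neg_zero]

theorem isFarthestPointStep_sub_single (hX : (X : Set _) = signedBasis d m) {s : Finset (Fin d)}
    (hs : ∀ k : Fin d, (k : ℕ) < m → k ∉ s) {j : Fin d} (hj : (j : ℕ) < m) :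
    IsFarthestPointStep X (indicatorVec s) (indicatorVec s - EuclideanSpace.single j 1) := by
  rw [sub_eq_add_neg]
  refine isFarthestPointStep_indicatorVec hX hs (neg_single_mem_of_coe_eq_signedBasis hX hj) ?_
  rw [inner_neg_left, EuclideanSpace.inner_single_left, indicatorVec_apply, if_neg (hs j hj)]
  simp

theorem isFarthestPointStep_add_single (hX : (X : Set _) = signedBasis d m) {s : Finset (Fin d)}
    (hs : ∀ k : Fin d, (k : ℕ) < m → k ∉ s) {j : Fin d} (hj : (j : ℕ) < m) :
    IsFarthestPointStep X (indicatorVec s - EuclideanSpace.single j 1) (indicatorVec s) := by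
  set v := indicatorVec s - EuclideanSpace.single j 1
  have hv (k : Fin d) : v k = (if k ∈ s then 1 else 0) - if k = j then 1 else 0 := by
    simp [v, indicatorVec_apply]
  have hinner : ⟪EuclideanSpace.single j 1, v⟫ = -1 := by
    simp [EuclideanSpace.inner_single_left, hv, hs j hj]
  have hstep := isFarthestPointStep_of_forall_le hX (v := v)
    (single_mem_of_coe_eq_signedBasis hX j) (fun k => ?_) (fun k hk => ?_)
  · rwa [sub_add_cancel] at hstep
  · rw [hinner, hv]
    split_ifs <;> norm_num
  · rw [hinner, hv, if_neg (hs k hk)]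
    split_ifs <;> norm_num

def coordBlock (d m i : ℕ) : Finset (Fin d) :=
  {k | m ≤ (k : ℕ) ∧ (k : ℕ) < m + i}

theorem coordBlock_zero : coordBlock d m 0 = ∅ := by
  ext k
  simp [coordBlock]

theorem coordBlock_succ {i : ℕ} (h : m + i < d) :
    coordBlock d m (i + 1) = insert ⟨m + i, h⟩ (coordBlock d m i) := by
  ext k
  simp only [coordBlock, mem_filter, mem_univ, true_and, mem_insert, Fin.ext_iff]
  omega

theorem notMem_coordBlock {i : ℕ} (h : m + i < d) : (⟨m + i, h⟩ : Fin d) ∉ coordBlock d m i := by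
  simp [coordBlock]

theorem card_coordBlock {i : ℕ} (h : m + i ≤ d) : #(coordBlock d m i) = i := by
  induction i with
  | zero => simp [coordBlock_zero]
  | succ i ih =>
    rw [coordBlock_succ (by omega), card_insert_of_notMem (notMem_coordBlock _), ih (by omega)]

theorem notMem_coordBlock_of_lt {i : ℕ} {k : Fin d} (hk : (k : ℕ) < m) :
    k ∉ coordBlock d m i := by
  simp [coordBlock]
  omega

theorem isFarthestPointStep_coordBlock (hX : (X : Set _) = signedBasis d m) {i : ℕ}
    (h : m + i < d) :
    IsFarthestPointStep X (indicatorVec (coordBlock d m i))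
      (indicatorVec (coordBlock d m (i + 1))) := by
  rw [coordBlock_succ h, indicatorVec_insert (notMem_coordBlock h)]
  refine isFarthestPointStep_indicatorVec hX (fun _ => notMem_coordBlock_of_lt)
    (single_mem_of_coe_eq_signedBasis hX _) ?_
  rw [EuclideanSpace.inner_single_left, indicatorVec_apply, if_neg (notMem_coordBlock h)]
  simp

end SignedBasis

theorem stmt6_general (d m : ℕ) (hm1 : 1 ≤ m) (hmd : m ≤ d)
    (X : Finset (EuclideanSpace ℝ (Fin d)))
    (hXdef : (X : Set (EuclideanSpace ℝ (Fin d))) =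
      (Set.range fun i : Fin d => EuclideanSpace.single i (1 : ℝ)) ∪
      ((fun i : Fin d => -EuclideanSpace.single i (1 : ℝ)) '' {i : Fin d | (i : ℕ) < m})) :
    ∃ u : ℕ → EuclideanSpace ℝ (Fin d),
      u 0 = 0 ∧
      (∀ i, ∃ χ ∈ X, (∀ x ∈ X, ⟪χ, u i⟫ ≤ ⟪x, u i⟫) ∧ u (i + 1) = u i + χ) ∧
      ∃ i, Real.sqrt ((d : ℝ) - (m : ℝ) + 1) ≤ ‖u i‖ := by
  have hX : (X : Set _) = signedBasis d m := hXdef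
  let j₀ : Fin d := ⟨0, by omega⟩
  have hj₀ : (j₀ : ℕ) < m := hm1
  have htop : ∀ k : Fin d, (k : ℕ) < m → k ∉ coordBlock d m (d - m) :=
    fun _ => notMem_coordBlock_of_lt
  obtain ⟨u, hu0, hstep, hpeak⟩ := exists_seq_of_path_of_cycle
    (fun i => indicatorVec (coordBlock d m i)) (d - m)
    (fun i hi => isFarthestPointStep_coordBlock hX (by omega))
    (isFarthestPointStep_sub_single hX htop hj₀) (isFarthestPointStep_add_single hX htop hj₀)
  refine ⟨u, by rw [hu0, coordBlock_zero, indicatorVec_empty], hstep, d - m + 1, ?_⟩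
  rw [hpeak, Real.sqrt_le_left (norm_nonneg _),
    norm_sq_indicatorVec_sub_single (htop j₀ hj₀), card_coordBlock (by omega),
    Nat.cast_sub hmd]

/-- For `2 ≤ d` and `1 ≤ m ≤ d`, the set
`A_{d,m} = {e_1, ..., e_d, -e_1, ..., -e_m}` admits a valid farthest-point iteration reaching a
vector of length at least `√(d - m + 1)`; that is, `u*(A_{d,m}) ≥ √(d - m + 1)`. -/
theorem stmt6 (d m : ℕ) (hd : 2 ≤ d) (hm1 : 1 ≤ m) (hmd : m ≤ d)
    (X : Finset (EuclideanSpace ℝ (Fin d)))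
    (hXdef : (X : Set (EuclideanSpace ℝ (Fin d))) =
      (Set.range fun i : Fin d => EuclideanSpace.single i (1 : ℝ)) ∪
      ((fun i : Fin d => -EuclideanSpace.single i (1 : ℝ)) '' {i : Fin d | (i : ℕ) < m})) :
    ∃ u : ℕ → EuclideanSpace ℝ (Fin d),
      u 0 = 0 ∧
      (∀ i, ∃ χ ∈ X, (∀ x ∈ X, ⟪χ, u i⟫ ≤ ⟪x, u i⟫) ∧ u (i + 1) = u i + χ) ∧
      ∃ i, Real.sqrt ((d : ℝ) - (m : ℝ) + 1) ≤ ‖u i‖ :=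
  stmt6_general d m hm1 hmd X hXdef
end

section
/- Let d ≥ 2 and let X ⊆ S^{d-1} ⊆ R^d be a finite balanced set, i.e. δ(X) := -max_{‖u‖=1} min_{x∈X} ⟨x,u⟩ > 0. Then every valid farthest-point iteration satisfies ‖u_i‖ ≤ 1/(2·δ(X)) + 1 for all i ≥ 0; in particular u*(X) is finite. -/
open scoped RealInnerProductSpace

/-- If `X ⊆ S^{d-1} ⊆ ℝ^d` (`d ≥ 2`) is finite and balanced, i.e.
`δ(X) = -max_{‖v‖=1} min_{x ∈ X} ⟪x, v⟫ > 0`, then every valid farthest-point iteration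
satisfies `‖u i‖ ≤ 1/(2 δ(X)) + 1`. -/
theorem stmt11 (d : ℕ) (hd : 2 ≤ d) (X : Finset (EuclideanSpace ℝ (Fin d)))
    (hX : X.Nonempty) (hunit : ∀ x ∈ X, ‖x‖ = 1)
    (δ : ℝ)
    (hδ : δ = - sSup {r : ℝ | ∃ v : EuclideanSpace ℝ (Fin d), ‖v‖ = 1 ∧
      r = sInf ((fun x : EuclideanSpace ℝ (Fin d) => ⟪x, v⟫) '' (X : Set (EuclideanSpace ℝ (Fin d))))})
    (hδpos : 0 < δ)
    (u : ℕ → EuclideanSpace ℝ (Fin d)) (hu0 : u 0 = 0)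
    (hstep : ∀ i, ∃ χ ∈ X, (∀ x ∈ X, ⟪χ, u i⟫ ≤ ⟪x, u i⟫) ∧ u (i + 1) = u i + χ) :
    ∀ i, ‖u i‖ ≤ 1 / (2 * δ) + 1 := by
  obtain ⟨x0, hx0⟩ := hX
  have hbdd : BddAbove {r : ℝ | ∃ v : EuclideanSpace ℝ (Fin d), ‖v‖ = 1 ∧
      r = sInf ((fun x : EuclideanSpace ℝ (Fin d) => ⟪x, v⟫) '' (X : Set (EuclideanSpace ℝ (Fin d))))} := by
    refine ⟨1, ?_⟩
    rintro r ⟨v, hv, rfl⟩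
    refine le_trans (csInf_le ⟨-1, ?_⟩ ⟨x0, hx0, rfl⟩) ?_
    · rintro s ⟨x, hx, rfl⟩
      have h := abs_real_inner_le_norm x v
      rw [hunit x hx, hv] at h
      simp only
      linarith [(abs_le.mp (by linarith : |⟪x, v⟫| ≤ 1)).1]
    · have h := abs_real_inner_le_norm x0 v
      rw [hunit x0 hx0, hv] at h
      simp only
      linarith [(abs_le.mp (by linarith : |⟪x0, v⟫| ≤ 1)).2]
  have key : ∀ i, ∀ χ ∈ X, (∀ x ∈ X, ⟪χ, u i⟫ ≤ ⟪x, u i⟫) → u i ≠ 0 →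
      ⟪χ, u i⟫ ≤ -δ * ‖u i‖ := by
    intro i χ hχ hmin hne
    set w := u i with hw
    have hwpos : 0 < ‖w‖ := norm_pos_iff.mpr hne
    set v : EuclideanSpace ℝ (Fin d) := (‖w‖)⁻¹ • w with hvdef
    have hv : ‖v‖ = 1 := by
      rw [hvdef, norm_smul, norm_inv, norm_norm, inv_mul_cancel₀ hwpos.ne']
    have hmem : sInf ((fun x : EuclideanSpace ℝ (Fin d) => ⟪x, v⟫) '' (X : Set (EuclideanSpace ℝ (Fin d)))) ∈
        {r : ℝ | ∃ v : EuclideanSpace ℝ (Fin d), ‖v‖ = 1 ∧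
          r = sInf ((fun x : EuclideanSpace ℝ (Fin d) => ⟪x, v⟫) '' (X : Set (EuclideanSpace ℝ (Fin d))))} :=
      ⟨v, hv, rfl⟩
    have hrle : sInf ((fun x : EuclideanSpace ℝ (Fin d) => ⟪x, v⟫) '' (X : Set (EuclideanSpace ℝ (Fin d)))) ≤ -δ := by
      have h1 := le_csSup hbdd hmem
      have h2 : sSup {r : ℝ | ∃ v : EuclideanSpace ℝ (Fin d), ‖v‖ = 1 ∧
          r = sInf ((fun x : EuclideanSpace ℝ (Fin d) => ⟪x, v⟫) '' (X : Set (EuclideanSpace ℝ (Fin d))))} = -δ := by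
        rw [hδ]; ring
      linarith
    have hχv : ⟪χ, v⟫ ≤ sInf ((fun x : EuclideanSpace ℝ (Fin d) => ⟪x, v⟫) '' (X : Set (EuclideanSpace ℝ (Fin d)))) := by
      refine le_csInf ⟨_, ⟨x0, hx0, rfl⟩⟩ ?_
      rintro s ⟨x, hx, rfl⟩
      simp only [hvdef, real_inner_smul_right]
      exact mul_le_mul_of_nonneg_left (hmin x hx) (inv_nonneg.mpr hwpos.le)
    have hsplit : ⟪χ, v⟫ = (‖w‖)⁻¹ * ⟪χ, w⟫ := by
      rw [hvdef, real_inner_smul_right]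
    have : (‖w‖)⁻¹ * ⟪χ, w⟫ ≤ -δ := by
      rw [← hsplit]; linarith
    have h2 := mul_le_mul_of_nonneg_left this hwpos.le
    rw [← mul_assoc, mul_inv_cancel₀ hwpos.ne', one_mul] at h2
    linarith [h2]
  intro i
  induction i with
  | zero =>
    rw [hu0, norm_zero]
    positivity
  | succ i ih =>
    obtain ⟨χ, hχ, hmin, heq⟩ := hstep i
    have hχn : ‖χ‖ = 1 := hunit χ hχ
    by_cases hcase : ‖u i‖ ≤ 1 / (2 * δ)
    · calc ‖u (i + 1)‖ = ‖u i + χ‖ := by rw [heq]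
        _ ≤ ‖u i‖ + ‖χ‖ := norm_add_le _ _
        _ ≤ 1 / (2 * δ) + 1 := by rw [hχn]; linarith
    · push_neg at hcase
      have hne : u i ≠ 0 := by
        intro h
        rw [h, norm_zero] at hcase
        have : 0 < 1 / (2 * δ) := by positivity
        linarith
      have hk := key i χ hχ hmin hne
      have hsq : ‖u (i + 1)‖ ^ 2 ≤ ‖u i‖ ^ 2 := by
        rw [heq]
        have hexp := norm_add_sq_real (u i) χ
        rw [hχn] at hexp
        have hcomm : ⟪u i, χ⟫ = ⟪χ, u i⟫ := real_inner_comm _ _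
        have h3 : 1 < 2 * δ * ‖u i‖ := by
          rw [div_lt_iff₀ (by positivity)] at hcase
          linarith
        nlinarith
      have hle : ‖u (i + 1)‖ ≤ ‖u i‖ := by
        nlinarith [norm_nonneg (u (i + 1)), norm_nonneg (u i)]
      linarith
end

section
/- For every M > 0 and every d ≥ 3, there exists a finite (d-1)-balanced set X of unit vectors in R^d with u*(X) ≥ √M. Consequently u**(d, d-1) = ∞ for d ≥ 3. -/
/-!
Let `p, q` be orthonormal, `c² + s² = 1` with `s > 0` small, and let `X` be a set of unit vectors
in the half-space `⟪x, q⟫ ≥ 0` containing `p`, `t = -c p + s q` and `(3/5) p + (4/5) q`, all of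
whose other elements satisfy `⟪x, p⟫ ≥ -3/5`. From `(3/5) p + (4/5) q` the greedy walk can stay
in the plane of `p` and `q`: at `A p + B q` with `A, B ≥ 0` and `s B ≤ (c - 3/5) A` the vector `t`
minimises `⟪x, A p + B q⟫`, and once `A ≤ 0` the vector `p` does. So as long as the constraints
hold, the walk repeats rounds `t, p`, each moving it by `(1 - c) p + s q`. As `1 - c ≤ s²`, some
`1 / s²` rounds fit, and the `q`-coordinate reaches the order of `1 / s`.

The balance comes from the hyperplane `q^⊥`: it supports `conv X` in a face containing `0`, and
every face containing `0` contains each `x ∈ conv X` with `-λ x ∈ conv X` for some `λ > 0`.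
Enough of these lie in `q^⊥` to span it.
-/

open scoped RealInnerProductSpace

/-- A finite set `X` of unit vectors of `ℝ^d` is `b`-balanced if the origin belongs to a face
(extreme subset) of `conv X` of dimension `b`, but to no face of smaller dimension. -/
def IsBBalanced (d b : ℕ) (X : Finset (EuclideanSpace ℝ (Fin d))) : Prop :=
  (∃ F : Set (EuclideanSpace ℝ (Fin d)),
      IsExtreme ℝ (convexHull ℝ (X : Set (EuclideanSpace ℝ (Fin d)))) F ∧
      (0 : EuclideanSpace ℝ (Fin d)) ∈ F ∧ Module.finrank ℝ (vectorSpan ℝ F) = b) ∧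
  (∀ F : Set (EuclideanSpace ℝ (Fin d)),
      IsExtreme ℝ (convexHull ℝ (X : Set (EuclideanSpace ℝ (Fin d)))) F →
      (0 : EuclideanSpace ℝ (Fin d)) ∈ F → b ≤ Module.finrank ℝ (vectorSpan ℝ F))

open Module Relation

section Faces

variable {E : Type*} [AddCommGroup E] [Module ℝ E]

theorem zero_mem_openSegment_neg_smul (y : E) {t : ℝ} (ht : 0 < t) :
    (0 : E) ∈ openSegment ℝ y (-(t • y)) :=
  ⟨t / (t + 1), 1 / (t + 1), by positivity, by positivity, by field_simp, by module⟩

theorem IsExtreme.mem_of_neg_smul_mem {A F : Set E} (hF : IsExtreme ℝ A F) (h0 : (0 : E) ∈ F)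
    {y : E} (hy : y ∈ A) {t : ℝ} (ht : 0 < t) (hty : -(t • y) ∈ A) : y ∈ F :=
  hF.left_mem_of_mem_openSegment hy hty h0 (zero_mem_openSegment_neg_smul y ht)

theorem isExtreme_setOf_eq_zero {A : Set E} {f : E →ₗ[ℝ] ℝ} (hf : ∀ x ∈ A, 0 ≤ f x) :
    IsExtreme ℝ A {x ∈ A | f x = 0} := by
  refine ⟨fun x hx => hx.1, ?_⟩
  rintro x₁ hx₁ x₂ hx₂ x ⟨-, hx⟩ ⟨a, b, ha, hb, -, rfl⟩
  have h₁ := hf x₁ hx₁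
  have h₂ := hf x₂ hx₂
  simp only [map_add, map_smul, smul_eq_mul] at hx
  exact ⟨hx₁, by nlinarith⟩

theorem card_le_finrank_vectorSpan [FiniteDimensional ℝ E] {F : Set E} (h0 : (0 : E) ∈ F)
    {ι : Type*} [Fintype ι] {v : ι → E} (hv : LinearIndependent ℝ v) (hvF : ∀ i, v i ∈ F) :
    Fintype.card ι ≤ finrank ℝ (vectorSpan ℝ F) := by
  rw [← finrank_span_eq_card hv]
  refine Submodule.finrank_mono (Submodule.span_le.2 ?_)
  rintro _ ⟨i, rfl⟩
  simpa using vsub_mem_vectorSpan ℝ (hvF i) h0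

theorem finrank_vectorSpan_lt [FiniteDimensional ℝ E] {F : Set E} {f : E →ₗ[ℝ] ℝ} (hf : f ≠ 0)
    (hF : ∀ x ∈ F, f x = 0) : finrank ℝ (vectorSpan ℝ F) < finrank ℝ E := by
  have hle : vectorSpan ℝ F ≤ LinearMap.ker f := by
    rw [vectorSpan_def, Submodule.span_le]
    rintro _ ⟨x, hx, y, hy, rfl⟩
    simp [hF x hx, hF y hy]
  exact Submodule.finrank_lt (ne_top_of_le_ne_top (mt LinearMap.ker_eq_top.1 hf) hle)

end Faces

theorem isBBalanced_sub_one_of_linearIndependent {d : ℕ} {X : Finset (EuclideanSpace ℝ (Fin d))}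
    {f : EuclideanSpace ℝ (Fin d) →ₗ[ℝ] ℝ} (hf : f ≠ 0) (hfX : ∀ x ∈ X, 0 ≤ f x)
    {ι : Type*} [Fintype ι] [Nonempty ι] {v : ι → EuclideanSpace ℝ (Fin d)}
    (hv : LinearIndependent ℝ v) (hcard : Fintype.card ι = d - 1)
    (hvX : ∀ i, v i ∈ convexHull ℝ (X : Set (EuclideanSpace ℝ (Fin d))) ∧
      ∃ t : ℝ, 0 < t ∧ -(t • v i) ∈ convexHull ℝ (X : Set (EuclideanSpace ℝ (Fin d)))) :
    IsBBalanced d (d - 1) X := by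
  have hlower : ∀ F, IsExtreme ℝ (convexHull ℝ (X : Set (EuclideanSpace ℝ (Fin d)))) F →
      0 ∈ F → d - 1 ≤ finrank ℝ (vectorSpan ℝ F) := by
    intro F hF h0
    rw [← hcard]
    refine card_le_finrank_vectorSpan h0 hv fun i => ?_
    obtain ⟨hi, t, ht, hti⟩ := hvX i
    exact hF.mem_of_neg_smul_mem h0 hi ht hti
  have h0 : (0 : EuclideanSpace ℝ (Fin d)) ∈ convexHull ℝ (X : Set (EuclideanSpace ℝ (Fin d))) := by
    obtain ⟨hi, t, ht, hti⟩ := hvX (Classical.arbitrary ι)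
    exact (convex_convexHull ℝ _).openSegment_subset hi hti (zero_mem_openSegment_neg_smul _ ht)
  set F := {x ∈ convexHull ℝ (X : Set (EuclideanSpace ℝ (Fin d))) | f x = 0}
  have hF : IsExtreme ℝ (convexHull ℝ (X : Set (EuclideanSpace ℝ (Fin d)))) F :=
    isExtreme_setOf_eq_zero fun x hx => convexHull_min hfX ((convex_Ici 0).linear_preimage f) hx
  have h0F : (0 : EuclideanSpace ℝ (Fin d)) ∈ F := ⟨h0, map_zero f⟩
  have hupper := finrank_vectorSpan_lt hf (F := F) fun x hx => hx.2
  rw [finrank_euclideanSpace_fin] at hupper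
  exact ⟨⟨F, hF, h0F, by have := hlower F hF h0F; omega⟩, hlower⟩

section Zigzag

variable {E : Type*} [NormedAddCommGroup E] [InnerProductSpace ℝ E]

def IsGreedyStep (X : Finset E) (w w' : E) : Prop :=
  ∃ χ ∈ X, (∀ x ∈ X, ⟪χ, w⟫ ≤ ⟪x, w⟫) ∧ w' = w + χ

theorem exists_isGreedyStep {X : Finset E} (hX : X.Nonempty) (w : E) :
    ∃ w', IsGreedyStep X w w' := by
  obtain ⟨χ, hχ, hmin⟩ := X.exists_min_image (fun x => ⟪x, w⟫) hX
  exact ⟨w + χ, χ, hχ, hmin, rfl⟩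

theorem exists_greedyWalk_of_reflTransGen {X : Finset E} (hX : X.Nonempty) {a w : E}
    (h : ReflTransGen (IsGreedyStep X) a w) :
    ∃ u : ℕ → E, u 0 = a ∧ (∀ i, IsGreedyStep X (u i) (u (i + 1))) ∧ ∃ i, u i = w := by
  induction h using Relation.ReflTransGen.head_induction_on with
  | refl =>
    choose next hnext using exists_isGreedyStep hX
    exact ⟨fun i => next^[i] w, rfl,
      fun i => by simpa only [Function.iterate_succ_apply'] using hnext _, 0, rfl⟩
  | @head a c hac _ ih =>
    obtain ⟨u, hu0, hu, i, hi⟩ := ih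
    refine ⟨fun i => Nat.casesOn i a u, rfl, ?_, i + 1, hi⟩
    rintro (_ | i)
    · simpa [hu0] using hac
    · exact hu i

theorem norm_smul_add_smul_eq_one {p q : E} (hp : ‖p‖ = 1) (hq : ‖q‖ = 1) (hpq : ⟪p, q⟫ = 0)
    {a b : ℝ} (hab : a ^ 2 + b ^ 2 = 1) : ‖a • p + b • q‖ = 1 := by
  rw [← pow_eq_one_iff_of_nonneg (norm_nonneg _) two_ne_zero, ← real_inner_self_eq_norm_sq, ← hab]
  simp only [inner_add_left, inner_add_right, real_inner_smul_left, real_inner_smul_right,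
    real_inner_comm p q, hpq]
  simp only [real_inner_self_eq_norm_sq, hp, hq]
  ring

theorem le_norm_smul_add_smul {p q : E} (hq : ‖q‖ = 1) (hpq : ⟪p, q⟫ = 0) (A B : ℝ) :
    B ≤ ‖A • p + B • q‖ := by
  have h := real_inner_le_norm q (A • p + B • q)
  simpa [inner_add_right, real_inner_smul_right, real_inner_comm p q, hpq,
    real_inner_self_eq_norm_sq, hq] using h

structure IsZigzagFrame (X : Finset E) (p q : E) (c s : ℝ) : Prop where
  norm_p : ‖p‖ = 1
  norm_q : ‖q‖ = 1
  inner_p_q : ⟪p, q⟫ = 0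
  norm_le_one : ∀ x ∈ X, ‖x‖ ≤ 1
  inner_q_nonneg : ∀ x ∈ X, 0 ≤ ⟪x, q⟫
  neg_three_fifths_le_inner_p : ∀ x ∈ X, x ≠ (-c) • p + s • q → -(3 / 5) ≤ ⟪x, p⟫
  p_mem : p ∈ X
  tilt_mem : (-c) • p + s • q ∈ X
  start_mem : (3 / 5 : ℝ) • p + (4 / 5 : ℝ) • q ∈ X

namespace IsZigzagFrame

variable {X : Finset E} {p q : E} {c s : ℝ}

theorem isGreedyStep_add_p (h : IsZigzagFrame X p q c s) {A B : ℝ} (hA : A ≤ 0) (hB : 0 ≤ B) :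
    IsGreedyStep X (A • p + B • q) ((A + 1) • p + B • q) := by
  refine ⟨p, h.p_mem, fun x hx => ?_, by module⟩
  have hxp : ⟪x, p⟫ ≤ 1 :=
    calc ⟪x, p⟫ ≤ ‖x‖ * ‖p‖ := real_inner_le_norm x p
      _ ≤ 1 := by rw [h.norm_p, mul_one]; exact h.norm_le_one x hx
  have hxq := h.inner_q_nonneg x hx
  simp only [inner_add_right, real_inner_smul_right, real_inner_self_eq_norm_sq, h.norm_p,
    h.inner_p_q]
  nlinarith

theorem isGreedyStep_add_tilt (h : IsZigzagFrame X p q c s) {A B : ℝ} (hA : 0 ≤ A) (hB : 0 ≤ B)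
    (hAB : s * B ≤ (c - 3 / 5) * A) :
    IsGreedyStep X (A • p + B • q) ((A - c) • p + (B + s) • q) := by
  refine ⟨(-c) • p + s • q, h.tilt_mem, fun x hx => ?_, by module⟩
  have htilt : ⟪(-c) • p + s • q, A • p + B • q⟫ = -c * A + s * B := by
    simp only [inner_add_left, inner_add_right, real_inner_smul_left, real_inner_smul_right,
      real_inner_comm p q, h.inner_p_q, real_inner_self_eq_norm_sq, h.norm_p, h.norm_q]
    ring
  rcases eq_or_ne x ((-c) • p + s • q) with rfl | hne
  · exact le_rfl
  have hxp := h.neg_three_fifths_le_inner_p x hx hne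
  have hxq := h.inner_q_nonneg x hx
  rw [htilt, inner_add_right, real_inner_smul_right, real_inner_smul_right]
  nlinarith

theorem reflTransGen_round (h : IsZigzagFrame X p q c s) (hs : 0 ≤ s) {A B : ℝ} (hA : 0 ≤ A)
    (hAc : A ≤ c) (hB : 0 ≤ B) (hAB : s * B ≤ (c - 3 / 5) * A) :
    ReflTransGen (IsGreedyStep X) (A • p + B • q) ((A - c + 1) • p + (B + s) • q) :=
  .tail (.single (h.isGreedyStep_add_tilt hA hB hAB))
    (h.isGreedyStep_add_p (by linarith) (by linarith))

theorem reflTransGen_zigzag (h : IsZigzagFrame X p q c s) (hc : c ≤ 1) (hs : 0 ≤ s) {K : ℕ}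
    (hKc : 3 / 5 + K * (1 - c) ≤ c) (hKs : s * (4 / 5 + K * s) ≤ (c - 3 / 5) * (3 / 5)) :
    ReflTransGen (IsGreedyStep X) 0 ((3 / 5 + K * (1 - c)) • p + (4 / 5 + K * s) • q) := by
  have hstart : IsGreedyStep X 0 ((3 / 5 : ℝ) • p + (4 / 5 : ℝ) • q) :=
    ⟨_, h.start_mem, by simp, by simp⟩
  suffices ∀ k ≤ K, ReflTransGen (IsGreedyStep X) 0
      ((3 / 5 + k * (1 - c)) • p + (4 / 5 + k * s) • q) from this K le_rfl
  intro k
  induction k with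
  | zero => simpa using .single hstart
  | succ k ih =>
    intro hk
    have hk0 : (0 : ℝ) ≤ k := k.cast_nonneg
    have hkK : (k : ℝ) + 1 ≤ K := by exact_mod_cast hk
    have hA : 3 / 5 ≤ 3 / 5 + k * (1 - c) := by nlinarith
    have hAc : 3 / 5 + k * (1 - c) ≤ c := by nlinarith
    have hB : s * (4 / 5 + k * s) ≤ s * (4 / 5 + K * s) := by nlinarith [mul_nonneg hs hs]
    refine (ih (by omega)).trans ?_
    convert h.reflTransGen_round hs (A := 3 / 5 + k * (1 - c)) (B := 4 / 5 + k * s)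
      (by linarith) hAc (by positivity) (by nlinarith) using 3
      <;> push_cast <;> ring

end IsZigzagFrame

section ZigzagSet

variable {ι : Type*} [Fintype ι] {b : OrthonormalBasis ι ℝ E} {i j k : ι} {c s : ℝ}

/- A coordinate variant of the paper's `C_d(0, μ, π/6)` with `(c, s) = (cos μ, sin μ)`: `b k` is
the normal `v`, and the part in `v^⊥` is `b i`, `-(3/5) b i + (4/5) b j` and the `±b l`, `l ≠ i, k`,
instead of a regular simplex. -/
open Classical in
noncomputable def zigzagSet (b : OrthonormalBasis ι ℝ E) (i j k : ι) (c s : ℝ) : Finset E :=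
  {b i, (-(3 / 5) : ℝ) • b i + (4 / 5 : ℝ) • b j, (-c) • b i + s • b k,
      (3 / 5 : ℝ) • b i + (4 / 5 : ℝ) • b k} ∪
    (Finset.univ.filter fun l => l ≠ i ∧ l ≠ k).biUnion fun l => {b l, -b l}

theorem mem_zigzagSet {x : E} :
    x ∈ zigzagSet b i j k c s ↔
      x = b i ∨ x = (-(3 / 5) : ℝ) • b i + (4 / 5 : ℝ) • b j ∨ x = (-c) • b i + s • b k ∨
        x = (3 / 5 : ℝ) • b i + (4 / 5 : ℝ) • b k ∨ ∃ l, l ≠ i ∧ l ≠ k ∧ (x = b l ∨ x = -b l) := by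
  simp [zigzagSet, and_assoc]

theorem basis_mem_zigzagSet {l : ι} (hli : l ≠ i) (hlk : l ≠ k) : b l ∈ zigzagSet b i j k c s :=
  mem_zigzagSet.2 <| .inr <| .inr <| .inr <| .inr ⟨l, hli, hlk, .inl rfl⟩

theorem neg_basis_mem_zigzagSet {l : ι} (hli : l ≠ i) (hlk : l ≠ k) :
    -b l ∈ zigzagSet b i j k c s :=
  mem_zigzagSet.2 <| .inr <| .inr <| .inr <| .inr ⟨l, hli, hlk, .inr rfl⟩

theorem norm_eq_one_of_mem_zigzagSet (hij : i ≠ j) (hik : i ≠ k) (hcs : c ^ 2 + s ^ 2 = 1) :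
    ∀ x ∈ zigzagSet b i j k c s, ‖x‖ = 1 := by
  have hunit {l l' : ι} (hll' : l ≠ l') {a a' : ℝ} (h : a ^ 2 + a' ^ 2 = 1) :
      ‖a • b l + a' • b l'‖ = 1 :=
    norm_smul_add_smul_eq_one (b.norm_eq_one _) (b.norm_eq_one _) (b.inner_eq_zero hll') h
  intro x hx
  rcases mem_zigzagSet.1 hx with rfl | rfl | rfl | rfl | ⟨l, -, -, rfl | rfl⟩
  · exact b.norm_eq_one i
  · exact hunit hij (by norm_num)
  · exact hunit hik (by rwa [neg_sq])
  · exact hunit hik (by norm_num)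
  · exact b.norm_eq_one l
  · rw [norm_neg, b.norm_eq_one l]

theorem inner_basis_nonneg_of_mem_zigzagSet (hik : i ≠ k) (hjk : j ≠ k) (hs : 0 ≤ s) :
    ∀ x ∈ zigzagSet b i j k c s, 0 ≤ ⟪x, b k⟫ := by
  intro x hx
  rcases mem_zigzagSet.1 hx with rfl | rfl | rfl | rfl | ⟨l, -, hlk, rfl | rfl⟩
  all_goals norm_num [inner_add_left, real_inner_smul_left, b.inner_eq_zero, *]

theorem le_inner_basis_of_mem_zigzagSet (hij : i ≠ j) (hik : i ≠ k) :
    ∀ x ∈ zigzagSet b i j k c s, x ≠ (-c) • b i + s • b k → -(3 / 5) ≤ ⟪x, b i⟫ := by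
  intro x hx hne
  rcases mem_zigzagSet.1 hx with rfl | rfl | rfl | rfl | ⟨l, hli, -, rfl | rfl⟩
  all_goals first
    | exact absurd rfl hne
    | norm_num [inner_add_left, real_inner_smul_left, b.inner_eq_zero, Ne.symm, *]

theorem isZigzagFrame_zigzagSet (hij : i ≠ j) (hik : i ≠ k) (hjk : j ≠ k)
    (hcs : c ^ 2 + s ^ 2 = 1) (hs : 0 ≤ s) :
    IsZigzagFrame (zigzagSet b i j k c s) (b i) (b k) c s where
  norm_p := b.norm_eq_one i
  norm_q := b.norm_eq_one k
  inner_p_q := b.inner_eq_zero hik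
  norm_le_one x hx := (norm_eq_one_of_mem_zigzagSet hij hik hcs x hx).le
  inner_q_nonneg := inner_basis_nonneg_of_mem_zigzagSet hik hjk hs
  neg_three_fifths_le_inner_p := le_inner_basis_of_mem_zigzagSet hij hik
  p_mem := mem_zigzagSet.2 (by simp)
  tilt_mem := mem_zigzagSet.2 (by simp)
  start_mem := mem_zigzagSet.2 (by simp)

end ZigzagSet

end Zigzag

theorem exists_zigzag_params (R : ℝ) :
    ∃ c s : ℝ, ∃ K : ℕ, c ^ 2 + s ^ 2 = 1 ∧ 0 ≤ s ∧ c ≤ 1 ∧ 3 / 5 + K * (1 - c) ≤ c ∧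
      s * (4 / 5 + K * s) ≤ (c - 3 / 5) * (3 / 5) ∧ R ≤ 4 / 5 + K * s := by
  obtain ⟨n, hn⟩ := exists_nat_ge (max R 1)
  have hn1 : (1 : ℝ) ≤ n := le_of_max_le_right hn
  obtain ⟨s, hs0, hsn⟩ : ∃ s : ℝ, 0 ≤ s ∧ 100 * n * s = 1 :=
    ⟨1 / (100 * n), by positivity, by field_simp⟩
  have hs1 : s ≤ 1 / 100 := by nlinarith
  have hKs : ((100 * n ^ 2 : ℕ) : ℝ) * s = n := by push_cast; linear_combination (n : ℝ) * hsn
  set c := √(1 - s ^ 2)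
  have hc2 : c ^ 2 = 1 - s ^ 2 := Real.sq_sqrt (by nlinarith)
  have hc1 : c ≤ 1 := by nlinarith
  have hcs : 1 - c ≤ s ^ 2 := by nlinarith [Real.sqrt_nonneg (1 - s ^ 2)]
  have hKc : ((100 * n ^ 2 : ℕ) : ℝ) * (1 - c) ≤ 1 / 100 := by
    calc _ ≤ ((100 * n ^ 2 : ℕ) : ℝ) * s ^ 2 := by gcongr
      _ = 1 / 100 := by rw [pow_two s, ← mul_assoc, hKs]; linarith
  refine ⟨c, s, 100 * n ^ 2, by linarith, hs0, hc1, by nlinarith, ?_, ?_⟩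
  · rw [hKs]; nlinarith
  · linarith [le_of_max_le_left hn]

theorem isBBalanced_zigzagSet {d : ℕ} {b : OrthonormalBasis (Fin d) ℝ (EuclideanSpace ℝ (Fin d))}
    {i j k : Fin d} {c s : ℝ} (hij : i ≠ j) (hik : i ≠ k) (hjk : j ≠ k) (hs : 0 ≤ s) :
    IsBBalanced d (d - 1) (zigzagSet b i j k c s) := by
  set X := zigzagSet b i j k c s
  have hX : ∀ x ∈ X, x ∈ convexHull ℝ (X : Set (EuclideanSpace ℝ (Fin d))) :=
    fun x hx => subset_convexHull ℝ _ hx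
  have : Nonempty {l // l ≠ k} := ⟨⟨i, hik⟩⟩
  refine isBBalanced_sub_one_of_linearIndependent (f := innerₗ _ (b k))
    (v := fun l : {l // l ≠ k} => b l) ?_ (fun x hx => ?_)
    (b.orthonormal.linearIndependent.comp _ Subtype.val_injective) (by simp [Fintype.card_subtype_compl]) ?_
  · intro h
    simpa using LinearMap.congr_fun h (b k)
  · simpa [real_inner_comm] using inner_basis_nonneg_of_mem_zigzagSet hik hjk hs x hx
  rintro ⟨l, hlk⟩
  rcases eq_or_ne l i with rfl | hli
  · refine ⟨hX _ (mem_zigzagSet.2 (.inl rfl)), 1 / 3, by norm_num, ?_⟩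
    convert convex_convexHull ℝ _
      (hX ((-(3 / 5) : ℝ) • b l + (4 / 5 : ℝ) • b j) (mem_zigzagSet.2 (.inr (.inl rfl))))
      (hX (-b j) (neg_basis_mem_zigzagSet hij.symm hjk))
      (by norm_num : (0 : ℝ) ≤ 5 / 9) (by norm_num : (0 : ℝ) ≤ 4 / 9) (by norm_num) using 1
    module
  · exact ⟨hX _ (basis_mem_zigzagSet hli hlk), 1, one_pos,
      by simpa using hX _ (neg_basis_mem_zigzagSet hli hlk)⟩

theorem stmt16_general (M : ℝ) (d : ℕ) (hd : 3 ≤ d) :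
    ∃ X : Finset (EuclideanSpace ℝ (Fin d)),
      (∀ x ∈ X, ‖x‖ = 1) ∧
      IsBBalanced d (d - 1) X ∧
      ∃ u : ℕ → EuclideanSpace ℝ (Fin d),
        u 0 = 0 ∧
        (∀ i, ∃ χ ∈ X, (∀ x ∈ X, ⟪χ, u i⟫ ≤ ⟪x, u i⟫) ∧ u (i + 1) = u i + χ) ∧
        ∃ i, Real.sqrt M ≤ ‖u i‖ := by
  obtain ⟨c, s, K, hcs, hs, hc, hKc, hKs, hM⟩ := exists_zigzag_params (Real.sqrt M)
  obtain ⟨i, j, k, hij, hik, hjk⟩ : ∃ i j k : Fin d, i ≠ j ∧ i ≠ k ∧ j ≠ k :=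
    ⟨⟨0, by omega⟩, ⟨1, by omega⟩, ⟨2, by omega⟩, by simp [Fin.ext_iff]⟩
  set b := EuclideanSpace.basisFun (Fin d) ℝ
  have hframe := isZigzagFrame_zigzagSet (b := b) hij hik hjk hcs hs
  obtain ⟨u, hu0, hu, m, hum⟩ := exists_greedyWalk_of_reflTransGen ⟨_, hframe.p_mem⟩
    (hframe.reflTransGen_zigzag hc hs hKc hKs)
  refine ⟨_, norm_eq_one_of_mem_zigzagSet hij hik hcs, isBBalanced_zigzagSet hij hik hjk hs,
    u, hu0, hu, m, hM.trans ?_⟩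
  rw [hum]
  exact le_norm_smul_add_smul hframe.norm_q hframe.inner_p_q _ _

/-- For every `M > 0` and `d ≥ 3` there is a finite `(d-1)`-balanced set `X` of
unit vectors in `ℝ^d` admitting a valid farthest-point iteration reaching length `≥ √M`;
hence `u**(d, d-1) = ∞`. -/
theorem stmt16 (M : ℝ) (hM : 0 < M) (d : ℕ) (hd : 3 ≤ d) :
    ∃ X : Finset (EuclideanSpace ℝ (Fin d)),
      (∀ x ∈ X, ‖x‖ = 1) ∧
      IsBBalanced d (d - 1) X ∧
      ∃ u : ℕ → EuclideanSpace ℝ (Fin d),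
        u 0 = 0 ∧
        (∀ i, ∃ χ ∈ X, (∀ x ∈ X, ⟪χ, u i⟫ ≤ ⟪x, u i⟫) ∧ u (i + 1) = u i + χ) ∧
        ∃ i, Real.sqrt M ≤ ‖u i‖ :=
  stmt16_general M d hd
end

section
/- Let u_j ∈ R^2 be nonzero with polar coordinates (λ, α), and χ_j a unit vector with argument ψ, and suppose α ∈ [-φ, φ), ψ ∈ [π + 2α - φ, π + φ] with 0 ≤ φ < π/6. If the first coordinate of u_{j+1} = u_j + χ_j is negative (i.e. λ < -cos ψ / cos α), then ‖u_{j+1}‖ ≤ 1. (Key inequality: cos ψ / cos α ≥ 2 cos(ψ - α) under these hypotheses.) -/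
/-- In polar coordinates, with `0 ≤ φ < π/6`, `α ∈ [-φ, φ)`,
`ψ ∈ [π + 2α - φ, π + φ]`, `λ > 0`, if `λ < -cos ψ / cos α` (the first coordinate of
`u_{j+1} = λ(cos α, sin α) + (cos ψ, sin ψ)` is negative), then `‖u_{j+1}‖ ≤ 1`; the key
inequality `cos ψ / cos α ≥ 2 cos(ψ - α)` also holds. -/
theorem stmt17 (φ α ψ lam : ℝ)
    (hφ0 : 0 ≤ φ) (hφ : φ < Real.pi / 6)
    (hα1 : -φ ≤ α) (hα2 : α < φ)
    (hψ1 : Real.pi + 2 * α - φ ≤ ψ) (hψ2 : ψ ≤ Real.pi + φ)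
    (hlam : 0 < lam)
    (hneg : lam < -Real.cos ψ / Real.cos α) :
    Real.cos ψ / Real.cos α ≥ 2 * Real.cos (ψ - α) ∧
    (lam * Real.cos α + Real.cos ψ) ^ 2 + (lam * Real.sin α + Real.sin ψ) ^ 2 ≤ 1 := by
  have hπ := Real.pi_pos
  have hcosα : 0 < Real.cos α := by
    apply Real.cos_pos_of_mem_Ioo
    constructor <;> [nlinarith; nlinarith]
  have h0 : Real.cos (ψ - 2 * α) ≤ 0 := by
    apply Real.cos_nonpos_of_pi_div_two_le_of_le <;> nlinarith
  have h1 := Real.cos_add (ψ - α) α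
  have h2 := Real.cos_sub (ψ - α) α
  have h3 : Real.cos ((ψ - α) + α) = Real.cos ψ := by ring_nf
  have h4 : Real.cos ((ψ - α) - α) = Real.cos (ψ - 2 * α) := by ring_nf
  have hid : Real.cos ψ = 2 * Real.cos (ψ - α) * Real.cos α - Real.cos (ψ - 2 * α) := by
    rw [← h3, ← h4]; rw [h1, h2]; ring
  have hkey : Real.cos ψ / Real.cos α ≥ 2 * Real.cos (ψ - α) := by
    rw [ge_iff_le, le_div_iff₀ hcosα]
    nlinarith
  refine ⟨hkey, ?_⟩
  have hneg2 : lam * Real.cos α < -Real.cos ψ := by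
    have := (lt_div_iff₀ hcosα).mp hneg
    linarith
  have hsum : lam + 2 * Real.cos (ψ - α) < 0 := by
    have h5 : -Real.cos ψ / Real.cos α ≤ -(2 * Real.cos (ψ - α)) := by
      rw [div_le_iff₀ hcosα]; nlinarith
    linarith
  have hcs := Real.cos_sub ψ α
  have p1 := Real.sin_sq_add_cos_sq α
  have p2 := Real.sin_sq_add_cos_sq ψ
  nlinarith [sq_nonneg lam, mul_pos hlam hlam]
end

section
/- Let 0 ≤ φ < π/6, φ̄ = π/6 - φ, and let (λ, δ) be polar coordinates with δ ∈ [π/2 - φ̄, π/2] and √3/(2 sin(δ - φ)) ≤ λ ≤ 1. Then the point w = (λ cos δ - cos φ, λ sin δ - sin φ) has argument angle at least π/2 + φ̄; equivalently (λ cos δ - cos φ)/(λ sin δ - sin φ) ≤ -tan φ̄, given λ sin δ - sin φ > 0. -/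
/-- For `0 ≤ φ < π/6`, `φ̄ = π/6 - φ`, `δ ∈ [π/2 - φ̄, π/2]`,
`√3/(2 sin(δ - φ)) ≤ λ ≤ 1` and `λ sin δ - sin φ > 0`, the translated point
`(λ cos δ - cos φ, λ sin δ - sin φ)` has slope ratio
`(λ cos δ - cos φ)/(λ sin δ - sin φ) ≤ -tan φ̄`, i.e. its argument angle is `≥ π/2 + φ̄`. -/
theorem stmt18 (φ φb δ lam : ℝ)
    (hφ0 : 0 ≤ φ) (hφ : φ < Real.pi / 6)
    (hφb : φb = Real.pi / 6 - φ)
    (hδ1 : Real.pi / 2 - φb ≤ δ) (hδ2 : δ ≤ Real.pi / 2)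
    (hlam1 : Real.sqrt 3 / (2 * Real.sin (δ - φ)) ≤ lam) (hlam2 : lam ≤ 1)
    (hpos : 0 < lam * Real.sin δ - Real.sin φ) :
    (lam * Real.cos δ - Real.cos φ) / (lam * Real.sin δ - Real.sin φ) ≤ -Real.tan φb := by
  have hpi := Real.pi_pos
  have hφb0 : 0 < φb := by rw [hφb]; linarith
  have hφb6 : φb ≤ Real.pi / 6 := by rw [hφb]; linarith
  have hcosφb : 0 < Real.cos φb := by
    apply Real.cos_pos_of_mem_Ioo
    constructor <;> [linarith; linarith]
  -- bounds on δ - φb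
  have hA1 : Real.pi / 6 ≤ δ - φb := by linarith
  have hA2 : δ - φb ≤ Real.pi / 2 := by linarith
  have hcosA_le : Real.cos (δ - φb) ≤ Real.sqrt 3 / 2 := by
    rw [← Real.cos_pi_div_six]
    exact Real.cos_le_cos_of_nonneg_of_le_pi (by positivity) (by linarith) hA1
  have hcosA_nonneg : 0 ≤ Real.cos (δ - φb) := by
    apply Real.cos_nonneg_of_mem_Icc
    constructor <;> linarith
  -- bound on cos (φ - φb)
  have hcosB_ge : Real.sqrt 3 / 2 ≤ Real.cos (φ - φb) := by
    rw [← Real.cos_pi_div_six, ← Real.cos_abs (φ - φb)]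
    apply Real.cos_le_cos_of_nonneg_of_le_pi (abs_nonneg _) (by linarith)
    rw [abs_le]
    constructor <;> (rw [hφb]; linarith)
  have key : lam * Real.cos (δ - φb) ≤ Real.cos (φ - φb) := by
    nlinarith [mul_nonneg (sub_nonneg.2 hlam2) hcosA_nonneg]
  rw [div_le_iff₀ hpos]
  have htan : -Real.tan φb * (lam * Real.sin δ - Real.sin φ)
      = (-Real.sin φb * (lam * Real.sin δ - Real.sin φ)) / Real.cos φb := by
    rw [Real.tan_eq_sin_div_cos]; ring
  rw [htan, le_div_iff₀ hcosφb]
  have h1 := Real.cos_sub δ φb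
  have h2 := Real.cos_sub φ φb
  nlinarith [key]
end

section
/- In any valid farthest-point iteration u_0 = 0, u_{i+1} = u_i + χ_i on a finite set X of unit vectors in R^2 with 0 ∈ conv(X), if ‖u_i‖ > √2 and ‖u_{i-1}‖ ≤ √2 for some i ≥ 1, then the angle γ_{i-1} between u_{i-1} and χ_{i-1} satisfies π/2 + φ ≤ γ_{i-1} ≤ 2π/3 where π - 2φ is the largest angular gap between consecutive points of X; consequently X has an angular gap strictly greater than 2π/3. -/
open scoped RealInnerProductSpace

/-!
Let `v = u (i-1)` and `c = χ (i-1)`. Since `c` minimises `⟪·, v⟫` over the unit vectors of `X`,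
it is the point of `X` farthest in angle from `v`, i.e. closest in angle to `-v`; so the unit
direction `-v / ‖v‖` sees all of `X` at angle `≥ π - γ`, and maximality of the gap `π - 2φ`
gives `γ ≥ π/2 + φ`. On the other hand `‖v + c‖² = ‖v‖² + 2‖v‖ cos γ + 1 > 2` with
`‖v‖ ≤ √2 < (1 + √5)/2` forces `cos γ > -1/2`, i.e. `γ < 2π/3`.
-/

open InnerProductGeometry Real

theorem ne_zero_of_sqrt_two_lt_norm_add {E : Type*} [SeminormedAddCommGroup E] {v c : E}
    (hc : ‖c‖ = 1) (hvc : √2 < ‖v + c‖) : v ≠ 0 := by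
  rintro rfl
  rw [zero_add, hc] at hvc
  linarith [one_lt_sqrt_two]

variable {F : Type*} [NormedAddCommGroup F] [InnerProductSpace ℝ F]

theorem angle_le_angle_of_inner_le_inner {v x y : F} (hxy : ‖x‖ = ‖y‖) (h : ⟪y, v⟫ ≤ ⟪x, v⟫) :
    angle v x ≤ angle v y := by
  unfold angle
  apply arccos_le_arccos
  rw [hxy, real_inner_comm y v, real_inner_comm x v]
  exact div_le_div_of_nonneg_right h (by positivity)

theorem pi_sub_half_le_angle_of_inner_min {X : Set F} (hX : ∀ x ∈ X, ‖x‖ = 1) {G : ℝ}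
    (hG : G ∈ upperBounds {g : ℝ | ∃ w : F, ‖w‖ = 1 ∧ ∀ x ∈ X, g / 2 ≤ angle w x})
    {v c : F} (hv : v ≠ 0) (hc : c ∈ X) (hmin : ∀ x ∈ X, ⟪c, v⟫ ≤ ⟪x, v⟫) :
    π - G / 2 ≤ angle v c := by
  set w : F := -(‖v‖⁻¹ • v)
  have hw : ‖w‖ = 1 := by rw [norm_neg]; exact norm_smul_inv_norm hv
  have hangle_w (x : F) : angle w x = π - angle v x := by
    rw [angle_neg_left, angle_smul_left_of_pos _ _ (inv_pos.mpr (norm_pos_iff.mpr hv))]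
  have hmem : 2 * angle w c ∈ {g : ℝ | ∃ w : F, ‖w‖ = 1 ∧ ∀ x ∈ X, g / 2 ≤ angle w x} := by
    refine ⟨w, hw, fun x hx => ?_⟩
    have := angle_le_angle_of_inner_le_inner ((hX x hx).trans (hX c hc).symm) (hmin x hx)
    rw [hangle_w, hangle_w]
    linarith
  have := hG hmem
  rw [hangle_w] at this
  linarith

theorem angle_lt_two_pi_div_three_of_norm_add {v c : F} (hc : ‖c‖ = 1)
    (hv : ‖v‖ ≤ √2) (hvc : √2 < ‖v + c‖) : angle v c < 2 * π / 3 := by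
  have hnorm : 0 < ‖v‖ := norm_pos_iff.mpr (ne_zero_of_sqrt_two_lt_norm_add hc hvc)
  have hsq : 2 < ‖v‖ ^ 2 + 2 * ⟪v, c⟫ + 1 := by
    have h := pow_lt_pow_left₀ hvc (sqrt_nonneg 2) two_ne_zero
    rwa [sq_sqrt zero_le_two, norm_add_sq_real, hc, one_pow] at h
  have hv2 : ‖v‖ ^ 2 ≤ 2 := by
    simpa [sq_sqrt zero_le_two] using pow_le_pow_left₀ hnorm.le hv 2
  have hinner : -(‖v‖ / 2) < ⟪v, c⟫ := by
    rcases le_total ‖v‖ 1 with h | h <;> nlinarith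
  have hcos : cos (2 * π / 3) < cos (angle v c) := by
    rw [show 2 * π / 3 = π - π / 3 by ring, cos_pi_sub, cos_pi_div_three, cos_angle, hc,
      mul_one, lt_div_iff₀ hnorm]
    linarith
  by_contra! h
  have := cos_le_cos_of_nonneg_of_le_pi (by positivity) (angle_le_pi v c) h
  linarith

theorem stmt19_general (X : Finset (EuclideanSpace ℝ (Fin 2)))
    (hunit : ∀ x ∈ X, ‖x‖ = 1)
    (φ : ℝ)
    (hgap : IsGreatest {g : ℝ | ∃ w : EuclideanSpace ℝ (Fin 2), ‖w‖ = 1 ∧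
      ∀ x ∈ X, g / 2 ≤ InnerProductGeometry.angle w x} (Real.pi - 2 * φ))
    (u χ : ℕ → EuclideanSpace ℝ (Fin 2))
    (hstep : ∀ j, χ j ∈ X ∧ (∀ x ∈ X, ⟪χ j, u j⟫ ≤ ⟪x, u j⟫) ∧ u (j + 1) = u j + χ j)
    (i : ℕ)
    (hbig : Real.sqrt 2 < ‖u i‖) (hsmall : ‖u (i - 1)‖ ≤ Real.sqrt 2) :
    (Real.pi / 2 + φ ≤ InnerProductGeometry.angle (u (i - 1)) (χ (i - 1)) ∧
      InnerProductGeometry.angle (u (i - 1)) (χ (i - 1)) ≤ 2 * Real.pi / 3) ∧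
    2 * Real.pi / 3 < Real.pi - 2 * φ := by
  obtain ⟨j, rfl⟩ : ∃ j, i = j + 1 := Nat.exists_eq_succ_of_ne_zero (by rintro rfl; linarith)
  obtain ⟨hχ, hmin, hu⟩ := hstep j
  rw [hu] at hbig
  rw [Nat.add_sub_cancel] at hsmall ⊢
  have hv := ne_zero_of_sqrt_two_lt_norm_add (hunit _ hχ) hbig
  have hlow := pi_sub_half_le_angle_of_inner_min hunit hgap.2 hv hχ hmin
  have hup := angle_lt_two_pi_div_three_of_norm_add (hunit _ hχ) hsmall hbig
  exact ⟨⟨by linarith, hup.le⟩, by linarith⟩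

/-- In a valid farthest-point iteration on a finite set `X ⊆ S¹ ⊆ ℝ²` spanning
`ℝ²` with `0 ∈ conv X` and largest angular gap `π - 2φ` (expressed as: `π - 2φ` is the greatest
`g` such that some unit direction `w` has all points of `X` at angle `≥ g/2` from it), if
`‖u i‖ > √2` and `‖u (i-1)‖ ≤ √2` for some `i ≥ 1`, then the angle `γ` between `u (i-1)` and
`χ (i-1)` satisfies `π/2 + φ ≤ γ ≤ 2π/3`; consequently `X` has a gap greater than `2π/3`,
i.e. `π - 2φ > 2π/3`. -/
theorem stmt19 (X : Finset (EuclideanSpace ℝ (Fin 2)))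
    (hunit : ∀ x ∈ X, ‖x‖ = 1)
    (hspan : Submodule.span ℝ (X : Set (EuclideanSpace ℝ (Fin 2))) = ⊤)
    (h0 : (0 : EuclideanSpace ℝ (Fin 2)) ∈ convexHull ℝ (X : Set (EuclideanSpace ℝ (Fin 2))))
    (φ : ℝ) (hφ0 : 0 ≤ φ) (hφ : φ < Real.pi / 2)
    (hgap : IsGreatest {g : ℝ | ∃ w : EuclideanSpace ℝ (Fin 2), ‖w‖ = 1 ∧
      ∀ x ∈ X, g / 2 ≤ InnerProductGeometry.angle w x} (Real.pi - 2 * φ))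
    (u χ : ℕ → EuclideanSpace ℝ (Fin 2)) (hu0 : u 0 = 0)
    (hstep : ∀ j, χ j ∈ X ∧ (∀ x ∈ X, ⟪χ j, u j⟫ ≤ ⟪x, u j⟫) ∧ u (j + 1) = u j + χ j)
    (i : ℕ) (hi : 1 ≤ i)
    (hbig : Real.sqrt 2 < ‖u i‖) (hsmall : ‖u (i - 1)‖ ≤ Real.sqrt 2) :
    (Real.pi / 2 + φ ≤ InnerProductGeometry.angle (u (i - 1)) (χ (i - 1)) ∧
      InnerProductGeometry.angle (u (i - 1)) (χ (i - 1)) ≤ 2 * Real.pi / 3) ∧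
    2 * Real.pi / 3 < Real.pi - 2 * φ :=
  stmt19_general X hunit φ hgap u χ hstep i hbig hsmall
end
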